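/- arXiv:0908.1164 — 2 statements merged into one kernel-verified Lean document; each statement's English description precedes it below -/
import Mathlib

section
/- Let g = g₀ ⊕ g₁ be a Lie superalgebra over ℂ with [g₁,g₁]=0, (G,g) a Harish-Chandra pair, (H,h) a Harish-Chandra subpair with H closed in G. For p ≥ 0, an element s ∈ Hom(⋀^p(g₁), F_G(π^{-1}(U))) satisfies: s(X^r ∧ Ad_G(g)(Y^q))(gh) = 0 if q ≠ 0 and = s(X^r)(g) if q = 0 (for all g ∈ G, h ∈ H, X^r ∈ ⋀^r(g₁), Y^q ∈ ⋀^q(h₁), r+q=p) — if and only if s lies in the image of Υ ∘ Ψ ∘ Φ_{∧ψ}(⋀^p E^ψ), where ψ: H → GL((g₁/h₁)*) is given by [ψ(h)v](X+h₁) = v(Ad_G(h^{-1})(X)+h₁) and Υ(f)(Ad_G(g)(X))(g) = f(X̄)(g) with X̄ the image of X in ⋀(g₁/h₁). Equivalently, conditions (right-H-invariance of Koszul sections) and (pullback of sections of the homogeneous bundle ⋀^p E^ψ) define the same subsheaf of Hom(⋀^p(g₁), F_G). -/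
/-!
Write `π = ExteriorAlgebra.map W.mkQ` and `t x g = s (Ad g x) g`. The defining relation of `f`
says exactly that each `t · g` factors through `π`. Over a field `W.mkQ` has a linear section
`σ`, and `σ ∘ W.mkQ` differs from the identity by elements of `W`, so a linear map killing the
two-sided ideal generated by `ι W` factors through `π`; the vanishing condition on `s` says
precisely that `t · g` kills this ideal. The two invariance conditions then correspond to each
other because `π` intertwines `map (Ad h⁻¹)` with `map (qmap h)`.
-/

open ExteriorAlgebra

namespace ExteriorAlgebra

section CommRing

variable {R V N P M : Type*} [CommRing R] [AddCommGroup V] [Module R V] [AddCommGroup N]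
  [Module R N] [AddCommGroup P] [Module R P] [AddCommGroup M] [Module R M]

theorem map_map_apply (f : V →ₗ[R] N) (g : N →ₗ[R] P) (x : ExteriorAlgebra R V) :
    map g (map f x) = map (g ∘ₗ f) x :=
  DFunLike.congr_fun (map_comp_map f g) x

theorem map_map_mkQ_of_mk {W : Submodule R V} {q : V ⧸ W →ₗ[R] V ⧸ W} {p : V →ₗ[R] V}
    (hq : ∀ v, q (Submodule.Quotient.mk v) = Submodule.Quotient.mk (p v))
    (x : ExteriorAlgebra R V) : map q (map W.mkQ x) = map W.mkQ (map p x) := by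
  rw [map_map_apply, map_map_apply]
  congr 2
  exact LinearMap.ext hq

theorem map_mkQ_mul_ι_mul {W : Submodule R V} (a b : ExteriorAlgebra R V) {w : V}
    (hw : w ∈ W) : map W.mkQ (a * (ι R w * b)) = 0 := by
  rw [map_mul, map_mul, map_apply_ι, Submodule.mkQ_apply,
    (Submodule.Quotient.mk_eq_zero W).mpr hw, map_zero, zero_mul, mul_zero]

theorem apply_map_eq_of_sub_mem (W : Submodule R V) (φ : ExteriorAlgebra R V →ₗ[R] M)
    (hφ : ∀ a b : ExteriorAlgebra R V, ∀ w ∈ W, φ (a * ι R w * b) = 0)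
    {p : V →ₗ[R] V} (hp : ∀ v, v - p v ∈ W) (x : ExteriorAlgebra R V) :
    φ (map p x) = φ x := by
  suffices h : ∀ a b, φ (a * (x - map p x) * b) = 0 by
    have h₁ := h 1 1
    rwa [one_mul, mul_one, map_sub, sub_eq_zero, eq_comm] at h₁
  induction x using ExteriorAlgebra.induction with
  | algebraMap r => simp
  | ι v =>
    intro a b
    rw [map_apply_ι, ← map_sub]
    exact hφ a b _ (hp v)
  | mul x y hx hy =>
    intro a b
    have hsplit : x * y - map p (x * y) = x * (y - map p y) + (x - map p x) * map p y := by
      rw [map_mul]; noncomm_ring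
    rw [hsplit, mul_add, add_mul, map_add, ← mul_assoc a x, ← mul_assoc a (x - map p x),
      mul_assoc (a * (x - map p x)), hy, hx, add_zero]
  | add x y hx hy =>
    intro a b
    rw [map_add, add_sub_add_comm, mul_add, add_mul, map_add, hx, hy, add_zero]

variable {G : Type*} [Group G] (ρ : G →* (V ≃ₗ[R] V))

theorem map_rep_map_rep (g g' : G) (x : ExteriorAlgebra R V) :
    map (ρ g : V →ₗ[R] V) (map (ρ g') x) = map (ρ (g * g') : V →ₗ[R] V) x := by
  rw [map_map_apply, map_mul]
  rfl

theorem map_rep_map_rep_inv (g : G) (x : ExteriorAlgebra R V) :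
    map (ρ g : V →ₗ[R] V) (map (ρ g⁻¹) x) = x := by
  rw [map_rep_map_rep, mul_inv_cancel, map_one]
  exact DFunLike.congr_fun map_id x

theorem map_rep_inv_map_rep (g : G) (x : ExteriorAlgebra R V) :
    map (ρ g⁻¹ : V →ₗ[R] V) (map (ρ g) x) = x := by
  simpa using map_rep_map_rep_inv ρ g⁻¹ x

/-- In the paper's notation, `s = Υ(f)` means `adjointTwist ρ s = f ∘ map W.mkQ`. -/
def adjointTwist (s : ExteriorAlgebra R V →ₗ[R] (G → M)) :
    ExteriorAlgebra R V →ₗ[R] (G → M) where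
  toFun x g := s (map (ρ g : V →ₗ[R] V) x) g
  map_add' x y := by funext g; simp
  map_smul' r x := by funext g; simp

@[simp]
theorem adjointTwist_apply (s : ExteriorAlgebra R V →ₗ[R] (G → M)) (x : ExteriorAlgebra R V)
    (g : G) : adjointTwist ρ s x g = s (map (ρ g : V →ₗ[R] V) x) g :=
  rfl

end CommRing

theorem exists_apply_map_mkQ_eq {K V M : Type*} [Field K] [AddCommGroup V] [Module K V]
    [AddCommGroup M] [Module K M] (W : Submodule K V) (φ : ExteriorAlgebra K V →ₗ[K] M)
    (hφ : ∀ a b : ExteriorAlgebra K V, ∀ w ∈ W, φ (a * ι K w * b) = 0) :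
    ∃ ψ : ExteriorAlgebra K (V ⧸ W) →ₗ[K] M, ∀ x, ψ (map W.mkQ x) = φ x := by
  obtain ⟨σ, hσ⟩ := W.mkQ.exists_rightInverse_of_surjective W.range_mkQ
  have hp : ∀ v, v - σ (W.mkQ v) ∈ W := fun v =>
    (Submodule.Quotient.eq W).mp (LinearMap.congr_fun hσ (W.mkQ v)).symm
  exact ⟨φ ∘ₗ (map σ).toLinearMap, fun x => by
    simpa [map_map_apply] using apply_map_eq_of_sub_mem W φ hφ hp x⟩

end ExteriorAlgebra

theorem stmt_15_general {G V : Type*} [Group G] [AddCommGroup V] [Module ℂ V]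
    (H : Subgroup G) (W : Submodule ℂ V)
    (Ad : G →* (V ≃ₗ[ℂ] V))
    (qmap : H → ((V ⧸ W) →ₗ[ℂ] (V ⧸ W)))
    (hqmap : ∀ (h : H) (x : V),
      qmap h (Submodule.Quotient.mk x) = Submodule.Quotient.mk (Ad ((h : G)⁻¹) x))
    (s : ExteriorAlgebra ℂ V →ₗ[ℂ] (G → ℂ)) :
    ((∀ (g : G) (h : H) (x : ExteriorAlgebra ℂ V), s x (g * (h : G)) = s x g) ∧
     (∀ (g : G) (h : H) (x : ExteriorAlgebra ℂ V) (w : V), w ∈ W →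
       ∀ u : ExteriorAlgebra ℂ V,
        s (x * ExteriorAlgebra.map (Ad g).toLinearMap (ExteriorAlgebra.ι ℂ w * u))
          (g * (h : G)) = 0))
    ↔
    (∃ f : ExteriorAlgebra ℂ (V ⧸ W) →ₗ[ℂ] (G → ℂ),
      (∀ (g : G) (h : H) (x : ExteriorAlgebra ℂ (V ⧸ W)),
        f (ExteriorAlgebra.map (qmap h) x) (g * (h : G)) = f x g) ∧
      (∀ (g : G) (x : ExteriorAlgebra ℂ V),
        s (ExteriorAlgebra.map (Ad g).toLinearMap x) g
          = f (ExteriorAlgebra.map W.mkQ x) g)) := by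
  constructor
  · rintro ⟨hinv, hvan⟩
    obtain ⟨f, hf⟩ := exists_apply_map_mkQ_eq W (adjointTwist Ad s) fun a b w hw =>
      funext fun g => by simpa [mul_assoc] using hvan g 1 (map (Ad g : V →ₗ[ℂ] V) a) w hw b
    refine ⟨f, fun g h y => ?_, fun g x => (congrFun (hf x) g).symm⟩
    obtain ⟨x, rfl⟩ := map_surjective_iff.mpr W.mkQ_surjective y
    rw [map_map_mkQ_of_mk (hqmap h), hf, hf, adjointTwist_apply, adjointTwist_apply,
      map_rep_map_rep, mul_inv_cancel_right, hinv]
  · rintro ⟨f, hf_equivariant, hf⟩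
    have hs : ∀ g y, s y g = f (map W.mkQ (map (Ad g⁻¹ : V →ₗ[ℂ] V) y)) g := fun g y =>
      by rw [← hf, map_rep_map_rep_inv]
    have hinv : ∀ (g : G) (h : H) x, s x (g * h) = s x g := fun g h x => by
      rw [hs, hs, mul_inv_rev, ← map_rep_map_rep, ← map_map_mkQ_of_mk (hqmap h), hf_equivariant]
    refine ⟨hinv, fun g h x w hw u => ?_⟩
    rw [hinv, hs, map_mul, map_rep_inv_map_rep, map_mkQ_mul_ι_mul _ _ hw, map_zero, Pi.zero_apply]

/-- Equivalence of the two descriptions of the structure sheaf of `G/H` in the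
Koszul construction: a linear map `s : ⋀(g₁) → F_G` satisfies the
right-`H`-invariance conditions (5.2) of the paper — `s(x)(gh) = s(x)(g)` and
`s(x ∧ Ad_G(g)(ι(w) ∧ u))(gh) = 0` for `w ∈ h₁` — if and only if `s` comes,
via the maps `Υ ∘ Ψ ∘ Φ_{∧ψ}`, from an `ψ`-equivariant function `f` on `G`
with values in `⋀(g₁/h₁)*` (i.e. a section of the homogeneous bundle
`⋀E^ψ`). -/
theorem stmt_15 {G V : Type*} [Group G] [AddCommGroup V] [Module ℂ V]
    (H : Subgroup G) (W : Submodule ℂ V)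
    (Ad : G →* (V ≃ₗ[ℂ] V))
    (hW : ∀ h : H, ∀ x ∈ W, Ad (h : G) x ∈ W)
    (qmap : H → ((V ⧸ W) →ₗ[ℂ] (V ⧸ W)))
    (hqmap : ∀ (h : H) (x : V),
      qmap h (Submodule.Quotient.mk x) = Submodule.Quotient.mk (Ad ((h : G)⁻¹) x))
    (s : ExteriorAlgebra ℂ V →ₗ[ℂ] (G → ℂ)) :
    ((∀ (g : G) (h : H) (x : ExteriorAlgebra ℂ V), s x (g * (h : G)) = s x g) ∧
     (∀ (g : G) (h : H) (x : ExteriorAlgebra ℂ V) (w : V), w ∈ W →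
       ∀ u : ExteriorAlgebra ℂ V,
        s (x * ExteriorAlgebra.map (Ad g).toLinearMap (ExteriorAlgebra.ι ℂ w * u))
          (g * (h : G)) = 0))
    ↔
    (∃ f : ExteriorAlgebra ℂ (V ⧸ W) →ₗ[ℂ] (G → ℂ),
      (∀ (g : G) (h : H) (x : ExteriorAlgebra ℂ (V ⧸ W)),
        f (ExteriorAlgebra.map (qmap h) x) (g * (h : G)) = f x g) ∧
      (∀ (g : G) (x : ExteriorAlgebra ℂ V),
        s (ExteriorAlgebra.map (Ad g).toLinearMap x) g
          = f (ExteriorAlgebra.map W.mkQ x) g)) :=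
  stmt_15_general H W Ad qmap hqmap s
end

section
/- Let (G,O_G), (H,O_H) be Lie supergroups arising from Harish-Chandra pairs via the Koszul construction, and let Ψ: (G,O_G) → (H,O_H) be any homomorphism of Lie supergroups. Then Ψ is uniquely determined by the pair (Ψ_red, (dΨ)_e): explicitly, for every f ∈ Ô_H, X ∈ U(g), g ∈ G, one has Ψ*(f)(X)(g) = f((dΨ)_e(X))(Ψ_red(g)), where (dΨ)_e: U(g) → U(h) is the extension of the differential at the identity. In particular two Lie supergroup homomorphisms with the same reduced map and the same differential at e are equal. -/
/-!
Both sides of the identity are linear in `X ∈ U(g)`, and `U(g)` is spanned by monomials in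
elements of `g`. Ψ-relatedness of the right-invariant vector fields lets one peel a monomial
off the argument of `Ψ*`, one factor of `g` at a time, pushing it through `dΨ` into the
argument of `f`; what is left is `Ψ*` evaluated at `1`, i.e. the reduced map `Ψ_red`.
-/

section

variable {R A B M N : Type*} [CommSemiring R] [Semiring A] [Semiring B] [Algebra R A]
  [Algebra R B] [AddCommMonoid M] [Module R M] [AddCommMonoid N] [Module R N]
  {φ : A →ₐ[R] B} {Ψ : (B →ₗ[R] N) → (A →ₗ[R] M)} {S : Set A}

theorem apply_mul_eq_comp_mulLeft_of_mem_closure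
    (hS : ∀ s ∈ S, ∀ f Z, Ψ f (s * Z) = Ψ (f ∘ₗ LinearMap.mulLeft R (φ s)) Z)
    {m : A} (hm : m ∈ Submonoid.closure S) :
    ∀ f Z, Ψ f (m * Z) = Ψ (f ∘ₗ LinearMap.mulLeft R (φ m)) Z := by
  induction hm using Submonoid.closure_induction with
  | mem s hs => exact hS s hs
  | one => simp
  | mul x y _ _ ihx ihy =>
    intro f Z
    rw [mul_assoc, ihx, ihy, map_mul, LinearMap.mulLeft_mul, LinearMap.comp_assoc]

theorem eq_comp_of_adjoin_eq_top (hgen : Algebra.adjoin R S = ⊤)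
    (hS : ∀ s ∈ S, ∀ f Z, Ψ f (s * Z) = Ψ (f ∘ₗ LinearMap.mulLeft R (φ s)) Z)
    (ρ : N →ₗ[R] M) (hone : ∀ f, Ψ f 1 = ρ (f 1)) (f : B →ₗ[R] N) :
    Ψ f = ρ ∘ₗ f ∘ₗ φ.toLinearMap := by
  have hspan : Submodule.span R (Submonoid.closure S : Set A) = ⊤ := by
    rw [← Algebra.adjoin_eq_span, hgen, Algebra.top_toSubmodule]
  refine LinearMap.ext_on hspan fun m hm => ?_
  calc Ψ f m = Ψ f (m * 1) := by rw [mul_one]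
    _ = ρ (f (φ m)) := by
      rw [apply_mul_eq_comp_mulLeft_of_mem_closure hS hm, hone]
      simp

end

/-- A homomorphism of Koszul Lie supergroups is determined by its reduced map
`Φ` and its differential `φ` at the identity: if the pullback `Ψ*` agrees with
pullback by `Φ` on reductions (evaluation at `1 ∈ U(g)`), and the
right-invariant vector fields are `Ψ`-related (action of `Xe ∈ g` by left
multiplication in the argument), then `Ψ*(f)(X)(g) = f(φ(X))(Φ(g))` for all
`f`, `X ∈ U(g)`, `g ∈ G`; in particular two supergroup homomorphisms with the
same reduced map and differential coincide. -/
theorem stmt_18 {G H' : Type*} [Group G] [Group H']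
    {Ug Uh : Type*} [Ring Ug] [Ring Uh] [Algebra ℂ Ug] [Algebra ℂ Uh]
    (gset : Submodule ℂ Ug)
    (hgen : Algebra.adjoin ℂ (gset : Set Ug) = ⊤)
    (Φ : G →* H') (φ : Ug →ₐ[ℂ] Uh)
    (Ψstar : (Uh →ₗ[ℂ] (H' → ℂ)) → (Ug →ₗ[ℂ] (G → ℂ)))
    (hred : ∀ (f : Uh →ₗ[ℂ] (H' → ℂ)) (g : G), Ψstar f 1 g = f 1 (Φ g))
    (hrel : ∀ (f : Uh →ₗ[ℂ] (H' → ℂ)) (Xe : Ug), Xe ∈ gset → ∀ (Z : Ug) (g : G),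
      Ψstar f (Xe * Z) g = Ψstar (f ∘ₗ LinearMap.mulLeft ℂ (φ Xe)) Z g) :
    ∀ (f : Uh →ₗ[ℂ] (H' → ℂ)) (X : Ug) (g : G),
      Ψstar f X g = f (φ X) (Φ g) := by
  intro f X g
  have hΨ := eq_comp_of_adjoin_eq_top hgen
    (fun Xe hXe f Z => funext (hrel f Xe hXe Z)) (LinearMap.funLeft ℂ ℂ Φ)
    (fun f => funext (hred f)) f
  exact congrFun (LinearMap.congr_fun hΨ X) g
end
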